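/- arXiv:1808.00590 — 2 statements merged into one kernel-verified Lean document; each statement's English description precedes it below -/
import Mathlib

section
/- The utility loss of the defense grows monotonically with the amount of added noise: for fixed probability vectors P and T on n classes, the function w ↦ JSD(P, (1 - w)P + w T) is monotone nondecreasing on [0,1]; in particular, for fixed P and T (hence fixed α), JSD(P, P') with P' = (1 - cα)P + cα T is monotone nondecreasing in the hyperparameter c ∈ [0,1]. -/
/-!
Coordinatewise, the JSD summand `f_p(q) = p log p + q log q - (p + q) log ((p + q) / 2)` has
`∂f_p/∂q = log (2q / (p + q))`, whose sign is that of `q - p`: `f_p` decreases on `[0, p]` and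
increases on `[p, ∞)`. As `w` grows, `(1 - w) p + w t` moves monotonically away from `p`, so each
summand is nondecreasing in `w`. For the defense, `α ∈ [0, 1]` since `0 ≤ η(P) ≤ log n`, the upper
bound being Jensen's inequality for the concave `x ↦ -x log x`; so `c ↦ cα` maps `[0, 1]`
monotonically into `[0, 1]`.
-/

/-- `P` is a probability vector on `n` classes. -/
def IsProbVec {n : ℕ} (P : Fin n → ℝ) : Prop :=
  (∀ i, 0 ≤ P i) ∧ ∑ i, P i = 1

/-- Shannon entropy `η(P) = -∑ i, P i * log (P i)`. -/
noncomputable def shannonEntropy {n : ℕ} (P : Fin n → ℝ) : ℝ :=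
  -∑ i, P i * Real.log (P i)

/-- Noise magnitude `α = 1 - η(P) / log n` of the membership-inference defense. -/
noncomputable def noiseMag {n : ℕ} (P : Fin n → ℝ) : ℝ :=
  1 - shannonEntropy P / Real.log n

/-- Jensen-Shannon divergence with `M i = (P i + P' i)/2`
(the convention `0 * log (0 / x) = 0` holds automatically). -/
noncomputable def jsd {n : ℕ} (P P' : Fin n → ℝ) : ℝ :=
  ∑ i, (P i * Real.log (P i / ((P i + P' i) / 2)) +
        P' i * Real.log (P' i / ((P i + P' i) / 2)))

open Real Set

noncomputable def jsdTerm (p q : ℝ) : ℝ :=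
  p * log (p / ((p + q) / 2)) + q * log (q / ((p + q) / 2))

lemma mul_log_div_of_ne_zero (x : ℝ) {m : ℝ} (hm : m ≠ 0) :
    x * log (x / m) = x * log x - x * log m := by
  rcases eq_or_ne x 0 with rfl | hx
  · simp
  · rw [log_div hx hm]; ring

lemma jsdTerm_eq_of_nonneg {p q : ℝ} (hp : 0 ≤ p) (hq : 0 ≤ q) :
    jsdTerm p q = p * log p + q * log q - 2 * ((p + q) / 2 * log ((p + q) / 2)) := by
  rcases (add_nonneg hp hq).eq_or_lt with h | h
  · obtain ⟨rfl, rfl⟩ : p = 0 ∧ q = 0 := ⟨by linarith, by linarith⟩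
    simp [jsdTerm]
  · have hm : (p + q) / 2 ≠ 0 := by positivity
    rw [jsdTerm, mul_log_div_of_ne_zero p hm, mul_log_div_of_ne_zero q hm]
    ring

lemma continuousOn_jsdTerm {p : ℝ} (hp : 0 ≤ p) : ContinuousOn (jsdTerm p) (Ici 0) := by
  have h : Continuous fun q ↦ p * log p + q * log q - 2 * ((p + q) / 2 * log ((p + q) / 2)) :=
    by fun_prop
  exact h.continuousOn.congr fun q hq ↦ jsdTerm_eq_of_nonneg hp hq

lemma hasDerivAt_jsdTerm {p q : ℝ} (hp : 0 ≤ p) (hq : 0 < q) :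
    HasDerivAt (jsdTerm p) (log q - log ((p + q) / 2)) q := by
  have hmid : HasDerivAt (fun q ↦ (p + q) / 2) (1 / 2) q :=
    ((hasDerivAt_id q).const_add p).div_const 2
  have h := ((hasDerivAt_mul_log hq.ne').const_add (p * log p)).sub
    (((hasDerivAt_mul_log (by positivity)).comp q hmid).const_mul 2)
  refine (h.congr_deriv (by ring)).congr_of_eventuallyEq ?_
  filter_upwards [lt_mem_nhds hq] with x hx using jsdTerm_eq_of_nonneg hp hx.le

lemma monotoneOn_jsdTerm {p : ℝ} (hp : 0 ≤ p) : MonotoneOn (jsdTerm p) (Ici p) := by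
  refine monotoneOn_of_hasDerivWithinAt_nonneg (convex_Ici p)
    (f' := fun q ↦ log q - log ((p + q) / 2)) ((continuousOn_jsdTerm hp).mono (Ici_subset_Ici.2 hp))
    (fun q hq ↦ ?_) fun q hq ↦ ?_
  all_goals rw [interior_Ici, mem_Ioi] at hq
  · exact (hasDerivAt_jsdTerm hp (hp.trans_lt hq)).hasDerivWithinAt
  · exact sub_nonneg.2 (log_le_log (by linarith) (by linarith))

lemma antitoneOn_jsdTerm {p : ℝ} (hp : 0 ≤ p) : AntitoneOn (jsdTerm p) (Icc 0 p) := by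
  refine antitoneOn_of_hasDerivWithinAt_nonpos (convex_Icc 0 p)
    (f' := fun q ↦ log q - log ((p + q) / 2)) ((continuousOn_jsdTerm hp).mono Icc_subset_Ici_self)
    (fun q hq ↦ ?_) fun q hq ↦ ?_
  all_goals rw [interior_Icc] at hq
  · exact (hasDerivAt_jsdTerm hp hq.1).hasDerivWithinAt
  · exact sub_nonpos.2 (log_le_log hq.1 (by linarith [hq.2]))

lemma monotoneOn_comp_mix_of_antitoneOn_of_monotoneOn {f : ℝ → ℝ} {a p t : ℝ}
    (hanti : AntitoneOn f (Icc a p)) (hmono : MonotoneOn f (Ici p)) (ht : a ≤ t) :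
    MonotoneOn (fun w ↦ f ((1 - w) * p + w * t)) (Icc 0 1) := by
  rcases le_total p t with hpt | htp
  · refine hmono.comp (fun w hw v hv hwv ↦ ?_) fun w hw ↦ ?_
    · nlinarith
    · show p ≤ _; nlinarith [hw.1]
  · refine hanti.comp (fun w hw v hv hwv ↦ ?_) fun w hw ↦ ⟨?_, ?_⟩
    · nlinarith
    · nlinarith [hw.1, hw.2]
    · nlinarith [hw.1]

lemma shannonEntropy_eq_sum_negMulLog {n : ℕ} (P : Fin n → ℝ) :
    shannonEntropy P = ∑ i, negMulLog (P i) := by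
  simp [shannonEntropy, negMulLog_eq_neg]

lemma shannonEntropy_nonneg {n : ℕ} {P : Fin n → ℝ} (hP : IsProbVec P) : 0 ≤ shannonEntropy P := by
  rw [shannonEntropy_eq_sum_negMulLog]
  refine Finset.sum_nonneg fun i _ ↦ negMulLog_nonneg (hP.1 i) ?_
  exact hP.2 ▸ Finset.single_le_sum (fun j _ ↦ hP.1 j) (Finset.mem_univ i)

lemma shannonEntropy_le_log_card {n : ℕ} {P : Fin n → ℝ} (hP : IsProbVec P) :
    shannonEntropy P ≤ log n := by
  have hn : (0 : ℝ) < n := by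
    rcases Nat.eq_zero_or_pos n with rfl | hn
    · simpa using hP.2
    · exact_mod_cast hn
  have jensen := concaveOn_negMulLog.le_map_sum (t := Finset.univ) (w := fun _ ↦ (n : ℝ)⁻¹)
    (p := P) (fun _ _ ↦ by positivity) (by simp [hn.ne']) fun i _ ↦ hP.1 i
  have key : (n : ℝ)⁻¹ * shannonEntropy P ≤ (n : ℝ)⁻¹ * log n := by
    simpa [← Finset.mul_sum, hP.2, shannonEntropy_eq_sum_negMulLog, negMulLog] using jensen
  exact le_of_mul_le_mul_left key (inv_pos.2 hn)

-- For `n = 1` the division by `log n = 0` is junk, but `div_le_one_of_le₀` still applies.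
lemma noiseMag_mem_Icc {n : ℕ} {P : Fin n → ℝ} (hP : IsProbVec P) : noiseMag P ∈ Icc 0 1 := by
  have hη := div_nonneg (shannonEntropy_nonneg hP) (log_natCast_nonneg n)
  have hη' := div_le_one_of_le₀ (shannonEntropy_le_log_card hP) (log_natCast_nonneg n)
  exact ⟨by rw [noiseMag]; linarith, by rw [noiseMag]; linarith⟩

lemma jsd_mix_monotoneOn {n : ℕ} {P T : Fin n → ℝ} (hP : ∀ i, 0 ≤ P i) (hT : ∀ i, 0 ≤ T i) :
    MonotoneOn (fun w ↦ jsd P fun i ↦ (1 - w) * P i + w * T i) (Icc 0 1) :=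
  fun _ hw₁ _ hw₂ hw ↦ Finset.sum_le_sum fun i _ ↦
    monotoneOn_comp_mix_of_antitoneOn_of_monotoneOn (antitoneOn_jsdTerm (hP i))
      (monotoneOn_jsdTerm (hP i)) (hT i) hw₁ hw₂ hw

/-- The utility loss of the defense grows monotonically with the
amount of added noise: for fixed probability vectors `P` and `T` on `n` classes,
`w ↦ JSD(P, (1 - w)P + w T)` is monotone nondecreasing on `[0,1]`; in
particular, for fixed `P` and `T` (hence fixed `α`), `JSD(P, P')` with
`P' = (1 - cα)P + cα T` is monotone nondecreasing in `c ∈ [0,1]`. -/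
theorem jsd_mix_monotone {n : ℕ} (P T : Fin n → ℝ)
    (hP : IsProbVec P) (hT : IsProbVec T) :
    (∀ w₁ w₂ : ℝ, 0 ≤ w₁ → w₁ ≤ w₂ → w₂ ≤ 1 →
      jsd P (fun i => (1 - w₁) * P i + w₁ * T i) ≤
        jsd P (fun i => (1 - w₂) * P i + w₂ * T i)) ∧
    (∀ c₁ c₂ : ℝ, 0 ≤ c₁ → c₁ ≤ c₂ → c₂ ≤ 1 →
      jsd P (fun i => (1 - c₁ * noiseMag P) * P i + c₁ * noiseMag P * T i) ≤
        jsd P (fun i => (1 - c₂ * noiseMag P) * P i + c₂ * noiseMag P * T i)) := by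
  have hmono := jsd_mix_monotoneOn hP.1 hT.1
  obtain ⟨hα₀, hα₁⟩ := noiseMag_mem_Icc hP
  refine ⟨fun w₁ w₂ h₀ h₁₂ h₂ ↦ hmono ⟨h₀, h₁₂.trans h₂⟩ ⟨h₀.trans h₁₂, h₂⟩ h₁₂,
    fun c₁ c₂ h₀ h₁₂ h₂ ↦ hmono ?_ ?_ (mul_le_mul_of_nonneg_right h₁₂ hα₀)⟩
  · exact ⟨mul_nonneg h₀ hα₀, mul_le_one₀ (h₁₂.trans h₂) hα₀ hα₁⟩
  · exact ⟨mul_nonneg (h₀.trans h₁₂) hα₀, mul_le_one₀ h₂ hα₀ hα₁⟩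
end

section
/- Convexity bound on the utility loss of the defense: for probability vectors P and T on n classes and any w ∈ [0,1], the Jensen-Shannon divergence between P and the mixture (1 - w)P + w T satisfies JSD(P, (1 - w)P + w T) ≤ w · JSD(P, T). -/
/-- Two-term log-sum inequality. -/
lemma logsum2 {a1 a2 b1 b2 : ℝ} (ha1 : 0 ≤ a1) (ha2 : 0 ≤ a2) (hb1 : 0 < b1) (hb2 : 0 < b2) :
    (a1 + a2) * Real.log ((a1 + a2) / (b1 + b2)) ≤
      a1 * Real.log (a1 / b1) + a2 * Real.log (a2 / b2) := by
  have hs : (0:ℝ) < b1 + b2 := by linarith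
  have h := Real.convexOn_mul_log.2
    (Set.mem_Ici.2 (div_nonneg ha1 hb1.le)) (Set.mem_Ici.2 (div_nonneg ha2 hb2.le))
    (div_nonneg hb1.le hs.le) (div_nonneg hb2.le hs.le)
    (by field_simp)
  simp only [smul_eq_mul] at h
  have key : b1 / (b1 + b2) * (a1 / b1) + b2 / (b1 + b2) * (a2 / b2) = (a1 + a2) / (b1 + b2) := by
    field_simp
  rw [key] at h
  have e : ∀ a b : ℝ, 0 < b → b * (a / b * Real.log (a / b)) = a * Real.log (a / b) := by
    intro a b hb
    rw [← mul_assoc, mul_div_cancel₀ _ hb.ne']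
  calc (a1 + a2) * Real.log ((a1 + a2) / (b1 + b2))
      = (b1 + b2) * ((a1 + a2) / (b1 + b2) * Real.log ((a1 + a2) / (b1 + b2))) :=
        (e _ _ hs).symm
    _ ≤ (b1 + b2) * (b1 / (b1 + b2) * (a1 / b1 * Real.log (a1 / b1)) +
          b2 / (b1 + b2) * (a2 / b2 * Real.log (a2 / b2))) :=
        mul_le_mul_of_nonneg_left h hs.le
    _ = b1 * (a1 / b1 * Real.log (a1 / b1)) + b2 * (a2 / b2 * Real.log (a2 / b2)) := by
        field_simp
    _ = a1 * Real.log (a1 / b1) + a2 * Real.log (a2 / b2) := by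
        rw [e a1 b1 hb1, e a2 b2 hb2]

/-- Per-coordinate inequality for `0 < w < 1`. -/
lemma jsd_term_le (w p t : ℝ) (hw0 : 0 < w) (hw1 : w < 1) (hp : 0 ≤ p) (ht : 0 ≤ t) :
    p * Real.log (p / ((p + ((1 - w) * p + w * t)) / 2)) +
      ((1 - w) * p + w * t) *
        Real.log (((1 - w) * p + w * t) / ((p + ((1 - w) * p + w * t)) / 2)) ≤
    w * (p * Real.log (p / ((p + t) / 2)) + t * Real.log (t / ((p + t) / 2))) := by
  have e3 : ∀ x : ℝ, x ≠ 0 → x / (x / 2) = 2 := by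
    intro x hx; field_simp
  rcases eq_or_lt_of_le hp with hp0 | hp0
  · -- p = 0
    subst hp0
    rcases eq_or_lt_of_le ht with ht0 | ht0
    · subst ht0; simp
    · simp only [mul_zero, zero_mul, zero_add, zero_div, Real.log_zero, add_zero]
      rw [e3 (w * t) (by positivity), e3 t ht0.ne']
      exact le_of_eq (by ring)
  · -- p > 0
    have hwt : 0 ≤ w * t := by positivity
    have hb1 : 0 < (1 - w) * p := by nlinarith
    have hq : 0 ≤ (1 - w) * p + w * t := by linarith
    have hm : 0 < (p + t) / 2 := by linarith
    have hmw : 0 < (p + ((1 - w) * p + w * t)) / 2 := by linarith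
    set m := (p + t) / 2 with hmdef
    set mw := (p + ((1 - w) * p + w * t)) / 2 with hmwdef
    have hmix : mw = (1 - w) * p + w * m := by rw [hmwdef, hmdef]; ring
    have hb2 : 0 < w * m := by positivity
    -- first term
    have hlog := strictConcaveOn_log_Ioi.concaveOn.2 (Set.mem_Ioi.2 hp0) (Set.mem_Ioi.2 hm)
      (by linarith : (0:ℝ) ≤ 1 - w) hw0.le (by ring)
    simp only [smul_eq_mul] at hlog
    rw [← hmix] at hlog
    have d1 : Real.log p - Real.log mw ≤ w * (Real.log p - Real.log m) := by nlinarith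
    have t1 : p * Real.log (p / mw) ≤ w * (p * Real.log (p / m)) := by
      rw [Real.log_div hp0.ne' hmw.ne', Real.log_div hp0.ne' hm.ne']
      nlinarith [mul_le_mul_of_nonneg_left d1 hp0.le]
    -- second term
    have hls := logsum2 (le_of_lt hb1) hwt hb1 hb2
    rw [show (1 - w) * p + w * m = mw from hmix.symm, div_self hb1.ne', Real.log_one, mul_zero,
      zero_add, mul_div_mul_left t m hw0.ne'] at hls
    have t2 : ((1 - w) * p + w * t) * Real.log (((1 - w) * p + w * t) / mw) ≤
        w * (t * Real.log (t / m)) := by nlinarith [hls]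
    nlinarith [t1, t2]

/-- Convexity bound on the utility loss of the defense: for
probability vectors `P` and `T` on `n` classes and any `w ∈ [0,1]`, the
Jensen-Shannon divergence between `P` and the mixture `(1 - w)P + w T`
satisfies `JSD(P, (1 - w)P + w T) ≤ w * JSD(P, T)`. -/
theorem jsd_mix_le {n : ℕ} (P T : Fin n → ℝ)
    (hP : IsProbVec P) (hT : IsProbVec T) (w : ℝ) (hw0 : 0 ≤ w) (hw1 : w ≤ 1) :
    jsd P (fun i => (1 - w) * P i + w * T i) ≤ w * jsd P T := by
  rcases eq_or_lt_of_le hw0 with hw0' | hw0'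
  · -- w = 0
    subst hw0'
    simp only [jsd, sub_zero, one_mul, zero_mul, add_zero]
    apply le_of_eq
    apply Finset.sum_eq_zero
    intro i _
    rcases eq_or_ne (P i) 0 with h | h
    · simp [h]
    · rw [add_self_div_two, div_self h, Real.log_one]; ring
  rcases eq_or_lt_of_le hw1 with hw1' | hw1'
  · -- w = 1
    subst hw1'
    simp only [jsd, sub_self, zero_mul, one_mul, zero_add]
    exact le_rfl
  -- 0 < w < 1
  simp only [jsd]
  rw [Finset.mul_sum]
  apply Finset.sum_le_sum
  intro i _
  exact jsd_term_le w (P i) (T i) hw0' hw1' (hP.1 i) (hT.1 i)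
end
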